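/- Let p ≥ 3 be a prime, let q, k ≥ 1 be natural numbers and θ ∈ ℚ_p with |q|_p < |k|_p and |θ − 1|_p < |q|_p². Let ξ ∈ ℚ_p be a k-th root of unity with ξ ≠ 1, set x_ξ := 2 − q − θ + q·(θ−1)/(1−ξ) and r := |q·(θ−1)|_p. Then for all x, y in the ball B_r(x_ξ) one has |f(x) − f(y)|_p · |q·(θ−1)|_p = |k|_p · |x − y|_p (i.e. f expands distances on B_r(x_ξ) by the factor |k|_p/(|q|_p·|θ−1|_p)). -/

import Mathlib

/-!
Write the Potts–Bethe map as `f = g ^ k` with `g` a Möbius transformation of determinant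
`(θ - 1) * (θ - 1 + q)`. On the ball `B_r(x_ξ)` the denominator of `g` has constant norm
`r = |q (θ - 1)|`, so `g` scales distances by exactly `1 / r`, and `g(x_ξ)` lies within distance
`< 1` of the root of unity `ξ`. On the residue disc of the unit `ξ` the `k`-th power map scales
distances by exactly `|k|`: in the binomial expansion of `(v + d) ^ k - v ^ k` the linear term
`k d v ^ (k - 1)` strictly dominates, because `|binom k i| ≤ |k| / |i|` and `|d| ^ (i - 1) ≤ p ^ (1 - i)
< |i|` for `i ≥ 2` when `p` is odd.
-/

/-- The Potts–Bethe mapping on `ℚ_[p]` (with total division, so defined everywhere). -/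
noncomputable def pottsBethe (p : ℕ) [Fact p.Prime] (q k : ℕ) (θ : ℚ_[p]) : ℚ_[p] → ℚ_[p] :=
  fun x => ((θ * x + (q : ℚ_[p]) - 1) / (x + θ + (q : ℚ_[p]) - 2)) ^ k

open Finset IsUltrametricDist

namespace Padic

variable {p : ℕ} [Fact p.Prime]

lemma norm_le_inv_of_norm_lt_one {x : ℚ_[p]} (hx : ‖x‖ < 1) : ‖x‖ ≤ (p : ℝ)⁻¹ := by
  simpa using (norm_lt_pow_iff_norm_le_pow_sub_one x 0).1 (by simpa using hx)

lemma norm_natCast_le_one (n : ℕ) : ‖(n : ℚ_[p])‖ ≤ 1 := by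
  simpa using norm_int_le_one (p := p) n

lemma inv_pow_lt_norm_natCast (hp : p ≠ 2) (i : ℕ) :
    (p : ℝ)⁻¹ ^ (i + 1) < ‖((i + 2 : ℕ) : ℚ_[p])‖ := by
  by_contra! h
  have hdvd : (p : ℤ) ^ (i + 1) ∣ ((i + 2 : ℕ) : ℤ) := by
    rw [← norm_int_le_pow_iff_dvd, zpow_neg, zpow_natCast, ← inv_pow]
    exact_mod_cast h
  have hle : p ^ (i + 1) ≤ i + 2 := Nat.le_of_dvd (by omega) (by exact_mod_cast hdvd)
  have hp3 : 3 ≤ p := by have := (Fact.out : p.Prime).two_le; omega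
  have h3 : 3 ^ (i + 1) ≤ p ^ (i + 1) := Nat.pow_le_pow_left hp3 _
  have hi : i < 3 ^ i := Nat.lt_pow_self (by norm_num)
  rw [pow_succ] at h3
  omega

lemma norm_choose_mul_norm_le (k i : ℕ) :
    ‖(k.choose (i + 1) : ℚ_[p])‖ * ‖((i + 1 : ℕ) : ℚ_[p])‖ ≤ ‖(k : ℚ_[p])‖ := by
  cases k with
  | zero => simp
  | succ n =>
    have h := congrArg (fun m : ℕ => ‖(m : ℚ_[p])‖) (Nat.add_one_mul_choose_eq n i)
    simp only [Nat.cast_mul, norm_mul] at h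
    rw [← h]
    exact mul_le_of_le_one_right (norm_nonneg _) (norm_natCast_le_one _)

lemma norm_choose_mul_pow_lt (hp : p ≠ 2) {k i : ℕ} (hik : i + 2 ≤ k) {d : ℚ_[p]}
    (hd0 : d ≠ 0) (hd : ‖d‖ < 1) :
    ‖(k.choose (i + 2) : ℚ_[p])‖ * ‖d‖ ^ (i + 2) < ‖(k : ℚ_[p])‖ * ‖d‖ := by
  have hC : 0 < ‖(k.choose (i + 2) : ℚ_[p])‖ :=
    norm_pos_iff.2 (Nat.cast_ne_zero.2 (Nat.choose_pos hik).ne')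
  have hpow : ‖d‖ ^ (i + 1) < ‖((i + 2 : ℕ) : ℚ_[p])‖ :=
    (pow_le_pow_left₀ (norm_nonneg d) (norm_le_inv_of_norm_lt_one hd) _).trans_lt
      (inv_pow_lt_norm_natCast hp i)
  calc ‖(k.choose (i + 2) : ℚ_[p])‖ * ‖d‖ ^ (i + 2)
      = ‖(k.choose (i + 2) : ℚ_[p])‖ * ‖d‖ ^ (i + 1) * ‖d‖ := by ring
    _ < ‖(k.choose (i + 2) : ℚ_[p])‖ * ‖((i + 2 : ℕ) : ℚ_[p])‖ * ‖d‖ := by gcongr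
    _ ≤ ‖(k : ℚ_[p])‖ * ‖d‖ := by gcongr; exact norm_choose_mul_norm_le k (i + 1)

lemma norm_lt_of_lt_norm_natCast_sq {x : ℚ_[p]} {q : ℕ} (h : ‖x‖ < ‖(q : ℚ_[p])‖ ^ 2) :
    ‖x‖ < ‖(q : ℚ_[p])‖ :=
  h.trans_le (pow_le_of_le_one (norm_nonneg _) (norm_natCast_le_one q) two_ne_zero)

lemma norm_sum_lt {ι : Type*} {s : Finset ι} {f : ι → ℚ_[p]} {C : ℝ} (hC : 0 < C)
    (h : ∀ i ∈ s, ‖f i‖ < C) : ‖∑ i ∈ s, f i‖ < C := by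
  rcases s.eq_empty_or_nonempty with rfl | hs
  · simpa using hC
  · obtain ⟨i, hi, hle⟩ := exists_norm_finsetSum_le_of_nonempty hs f
    exact hle.trans_lt (h i hi)

lemma norm_add_eq_right_of_norm_lt {x y : ℚ_[p]} (h : ‖x‖ < ‖y‖) : ‖x + y‖ = ‖y‖ := by
  rw [norm_add_eq_max_of_norm_ne_norm h.ne, max_eq_right h.le]

theorem norm_pow_sub_pow (hp : p ≠ 2) {u v : ℚ_[p]} (hv : ‖v‖ = 1) (huv : ‖u - v‖ < 1)
    (k : ℕ) : ‖u ^ k - v ^ k‖ = ‖(k : ℚ_[p])‖ * ‖u - v‖ := by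
  obtain rfl | hd0 := eq_or_ne u v
  · simp
  replace hd0 : u - v ≠ 0 := sub_ne_zero.2 hd0
  set d := u - v
  cases k with
  | zero => simp
  | succ n =>
    have hexp : u ^ (n + 1) - v ^ (n + 1) = ∑ i ∈ range n,
        d ^ (i + 2) * v ^ (n + 1 - (i + 2)) * ((n + 1).choose (i + 2) : ℚ_[p]) +
          ((n + 1 : ℕ) : ℚ_[p]) * d * v ^ n := by
      rw [show u = d + v by ring, add_pow, sum_range_succ', sum_range_succ']
      simp only [zero_add, Nat.choose_one_right, Nat.choose_zero_right, pow_zero, pow_one,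
        Nat.add_sub_cancel]
      push_cast
      ring
    have hlead : ‖((n + 1 : ℕ) : ℚ_[p]) * d * v ^ n‖ = ‖((n + 1 : ℕ) : ℚ_[p])‖ * ‖d‖ := by
      rw [norm_mul, norm_mul, norm_pow, hv, one_pow, mul_one]
    have htail : ‖∑ i ∈ range n,
        d ^ (i + 2) * v ^ (n + 1 - (i + 2)) * ((n + 1).choose (i + 2) : ℚ_[p])‖ <
          ‖((n + 1 : ℕ) : ℚ_[p]) * d * v ^ n‖ := by
      rw [hlead]
      have hk0 : ((n + 1 : ℕ) : ℚ_[p]) ≠ 0 := Nat.cast_ne_zero.2 n.succ_ne_zero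
      refine norm_sum_lt (mul_pos (norm_pos_iff.2 hk0) (norm_pos_iff.2 hd0)) fun i hi => ?_
      rw [norm_mul, norm_mul, norm_pow, norm_pow, hv, one_pow, mul_one, mul_comm]
      exact norm_choose_mul_pow_lt hp (by simp at hi; omega) hd0 huv
    rw [hexp, norm_add_eq_right_of_norm_lt htail, hlead]

theorem norm_pow_sub_pow_of_near (hp : p ≠ 2) {u v w : ℚ_[p]} (hw : ‖w‖ = 1)
    (hu : ‖u - w‖ < 1) (hv : ‖v - w‖ < 1) (k : ℕ) :
    ‖u ^ k - v ^ k‖ = ‖(k : ℚ_[p])‖ * ‖u - v‖ := by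
  have hv1 : ‖v‖ = 1 := by
    rw [← sub_add_cancel v w, norm_add_eq_right_of_norm_lt (hw ▸ hv), hw]
  have huv : ‖u - v‖ < 1 := by
    rw [← dist_eq_norm] at hu hv ⊢
    exact (IsUltrametricDist.dist_triangle_max u w v).trans_lt (max_lt hu (dist_comm v w ▸ hv))
  exact norm_pow_sub_pow hp hv1 huv k

lemma norm_one_sub_eq_one_of_pow_eq_one (hp : p ≠ 2) {k : ℕ} (hk : k ≠ 0) {ξ : ℚ_[p]}
    (hξ : ξ ^ k = 1) (hξ1 : ξ ≠ 1) : ‖1 - ξ‖ = 1 := by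
  have hξn : ‖ξ‖ = 1 := (isOfFinOrder_iff_pow_eq_one.2 ⟨k, Nat.pos_of_ne_zero hk, hξ⟩).norm_eq_one
  refine le_antisymm ?_ (not_lt.1 fun hlt => ?_)
  · simpa [hξn, sub_eq_add_neg] using norm_add_le_max (1 : ℚ_[p]) (-ξ)
  have h := norm_pow_sub_pow hp norm_one (norm_sub_rev (1 : ℚ_[p]) ξ ▸ hlt) k
  rw [hξ, one_pow, sub_self, norm_zero, eq_comm, mul_eq_zero, norm_eq_zero, norm_eq_zero,
    Nat.cast_eq_zero, sub_eq_zero] at h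
  exact h.elim hk hξ1

end Padic

noncomputable def pottsBetheRatio (p : ℕ) [Fact p.Prime] (q : ℕ) (θ x : ℚ_[p]) : ℚ_[p] :=
  (θ * x + (q : ℚ_[p]) - 1) / (x + θ + (q : ℚ_[p]) - 2)

noncomputable def pottsBetheCenter (p : ℕ) [Fact p.Prime] (q : ℕ) (θ ξ : ℚ_[p]) : ℚ_[p] :=
  2 - (q : ℚ_[p]) - θ + (q : ℚ_[p]) * (θ - 1) / (1 - ξ)

lemma pottsBethe_eq_pow (p : ℕ) [Fact p.Prime] (q k : ℕ) (θ x : ℚ_[p]) :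
    pottsBethe p q k θ x = pottsBetheRatio p q θ x ^ k :=
  rfl

section PottsBethe

variable {p : ℕ} [Fact p.Prime] {q : ℕ} {θ ξ : ℚ_[p]}

lemma pottsBetheRatio_sub {x y : ℚ_[p]} (hx : x + θ + q - 2 ≠ 0) (hy : y + θ + q - 2 ≠ 0) :
    pottsBetheRatio p q θ x - pottsBetheRatio p q θ y =
      (θ - 1) * (θ - 1 + q) * (x - y) / ((x + θ + q - 2) * (y + θ + q - 2)) := by
  unfold pottsBetheRatio
  field_simp
  ring

lemma norm_pottsBetheRatio_sub_mul (hθ : ‖θ - 1‖ < ‖(q : ℚ_[p])‖) (hr : (q : ℚ_[p]) * (θ - 1) ≠ 0)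
    {x y : ℚ_[p]} (hx : ‖x + θ + q - 2‖ = ‖(q : ℚ_[p]) * (θ - 1)‖)
    (hy : ‖y + θ + q - 2‖ = ‖(q : ℚ_[p]) * (θ - 1)‖) :
    ‖pottsBetheRatio p q θ x - pottsBetheRatio p q θ y‖ * ‖(q : ℚ_[p]) * (θ - 1)‖ = ‖x - y‖ := by
  have hr' : ‖(q : ℚ_[p]) * (θ - 1)‖ ≠ 0 := norm_ne_zero_iff.2 hr
  rw [pottsBetheRatio_sub (norm_ne_zero_iff.1 (hx ▸ hr')) (norm_ne_zero_iff.1 (hy ▸ hr')),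
    norm_div, norm_mul, norm_mul, norm_mul, hx, hy, Padic.norm_add_eq_right_of_norm_lt hθ,
    mul_comm ‖θ - 1‖, ← norm_mul]
  field_simp

lemma norm_add_sub_two_eq_of_mem_ball (h1ξ : ‖1 - ξ‖ = 1) {x : ℚ_[p]}
    (hx : ‖x - pottsBetheCenter p q θ ξ‖ < ‖(q : ℚ_[p]) * (θ - 1)‖) :
    ‖x + θ + q - 2‖ = ‖(q : ℚ_[p]) * (θ - 1)‖ := by
  have hs : ‖(q : ℚ_[p]) * (θ - 1) / (1 - ξ)‖ = ‖(q : ℚ_[p]) * (θ - 1)‖ := by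
    rw [norm_div, h1ξ, div_one]
  rw [show x + θ + q - 2 = (x - pottsBetheCenter p q θ ξ) + q * (θ - 1) / (1 - ξ) by
      unfold pottsBetheCenter; ring, Padic.norm_add_eq_right_of_norm_lt (hs ▸ hx), hs]

lemma pottsBetheRatio_center_sub (hr : (q : ℚ_[p]) * (θ - 1) ≠ 0) (hξ1 : ξ ≠ 1) :
    pottsBetheRatio p q θ (pottsBetheCenter p q θ ξ) - ξ = (θ - 1) * (q + ξ - 1) / q := by
  have hq : (q : ℚ_[p]) ≠ 0 := left_ne_zero_of_mul hr
  have hθ : θ - 1 ≠ 0 := right_ne_zero_of_mul hr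
  have hξ : 1 - ξ ≠ 0 := sub_ne_zero.2 hξ1.symm
  unfold pottsBetheRatio pottsBetheCenter
  rw [show 2 - (q : ℚ_[p]) - θ + q * (θ - 1) / (1 - ξ) + θ + q - 2 = q * (θ - 1) / (1 - ξ) by ring]
  field_simp
  ring

lemma norm_pottsBetheRatio_center_sub_lt (hθ : ‖θ - 1‖ < ‖(q : ℚ_[p])‖) (h1ξ : ‖1 - ξ‖ = 1)
    (hr : (q : ℚ_[p]) * (θ - 1) ≠ 0) (hξ1 : ξ ≠ 1) :
    ‖pottsBetheRatio p q θ (pottsBetheCenter p q θ ξ) - ξ‖ < 1 := by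
  have hq : 0 < ‖(q : ℚ_[p])‖ := norm_pos_iff.2 (left_ne_zero_of_mul hr)
  have hnum : ‖(q : ℚ_[p]) + ξ - 1‖ ≤ 1 := by
    rw [show (q : ℚ_[p]) + ξ - 1 = q + -(1 - ξ) by ring]
    exact (norm_add_le_max _ _).trans (max_le (Padic.norm_natCast_le_one q) (by rw [norm_neg, h1ξ]))
  rw [pottsBetheRatio_center_sub hr hξ1, norm_div, norm_mul, div_lt_one hq]
  calc ‖θ - 1‖ * ‖(q : ℚ_[p]) + ξ - 1‖ ≤ ‖θ - 1‖ := mul_le_of_le_one_right (norm_nonneg _) hnum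
    _ < ‖(q : ℚ_[p])‖ := hθ

lemma norm_pottsBetheRatio_sub_lt_one_of_mem_ball (hθ : ‖θ - 1‖ < ‖(q : ℚ_[p])‖)
    (h1ξ : ‖1 - ξ‖ = 1) (hr : (q : ℚ_[p]) * (θ - 1) ≠ 0) (hξ1 : ξ ≠ 1) {x : ℚ_[p]}
    (hx : ‖x - pottsBetheCenter p q θ ξ‖ < ‖(q : ℚ_[p]) * (θ - 1)‖) :
    ‖pottsBetheRatio p q θ x - ξ‖ < 1 := by
  set c := pottsBetheCenter p q θ ξ
  have hc : ‖c - c‖ < ‖(q : ℚ_[p]) * (θ - 1)‖ := by simpa using norm_pos_iff.2 hr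
  have hxc : ‖pottsBetheRatio p q θ x - pottsBetheRatio p q θ c‖ < 1 := by
    have h := norm_pottsBetheRatio_sub_mul hθ hr (norm_add_sub_two_eq_of_mem_ball h1ξ hx)
      (norm_add_sub_two_eq_of_mem_ball h1ξ hc)
    rw [← h] at hx
    exact (mul_lt_iff_lt_one_left (norm_pos_iff.2 hr)).1 hx
  rw [← sub_add_sub_cancel _ (pottsBetheRatio p q θ c)]
  exact (norm_add_le_max _ _).trans_lt
    (max_lt hxc (norm_pottsBetheRatio_center_sub_lt hθ h1ξ hr hξ1))

end PottsBethe

theorem stmt17_general (p : ℕ) [Fact p.Prime] (hp : 3 ≤ p) (q k : ℕ) (hk : 1 ≤ k)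
    (θ : ℚ_[p]) (hθq : ‖θ - 1‖ < ‖(q : ℚ_[p])‖ ^ 2)
    (ξ : ℚ_[p]) (hξ : ξ ^ k = 1) (hξ1 : ξ ≠ 1) :
    ∀ x y : ℚ_[p],
      ‖x - (2 - (q : ℚ_[p]) - θ + (q : ℚ_[p]) * (θ - 1) / (1 - ξ))‖ < ‖(q : ℚ_[p]) * (θ - 1)‖ →
      ‖y - (2 - (q : ℚ_[p]) - θ + (q : ℚ_[p]) * (θ - 1) / (1 - ξ))‖ < ‖(q : ℚ_[p]) * (θ - 1)‖ →
      ‖pottsBethe p q k θ x - pottsBethe p q k θ y‖ * ‖(q : ℚ_[p]) * (θ - 1)‖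
        = ‖(k : ℚ_[p])‖ * ‖x - y‖ := by
  intro x y hx hy
  change ‖x - pottsBetheCenter p q θ ξ‖ < _ at hx
  change ‖y - pottsBetheCenter p q θ ξ‖ < _ at hy
  have hp2 : p ≠ 2 := by omega
  have hr : (q : ℚ_[p]) * (θ - 1) ≠ 0 := norm_pos_iff.1 ((norm_nonneg _).trans_lt hx)
  have hξn : ‖ξ‖ = 1 := (isOfFinOrder_iff_pow_eq_one.2 ⟨k, hk, hξ⟩).norm_eq_one
  have h1ξ : ‖1 - ξ‖ = 1 := Padic.norm_one_sub_eq_one_of_pow_eq_one hp2 (by omega) hξ hξ1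
  have hθ : ‖θ - 1‖ < ‖(q : ℚ_[p])‖ := Padic.norm_lt_of_lt_norm_natCast_sq hθq
  rw [pottsBethe_eq_pow, pottsBethe_eq_pow,
    Padic.norm_pow_sub_pow_of_near hp2 hξn
      (norm_pottsBetheRatio_sub_lt_one_of_mem_ball hθ h1ξ hr hξ1 hx)
      (norm_pottsBetheRatio_sub_lt_one_of_mem_ball hθ h1ξ hr hξ1 hy),
    mul_assoc, norm_pottsBetheRatio_sub_mul hθ hr (norm_add_sub_two_eq_of_mem_ball h1ξ hx)
      (norm_add_sub_two_eq_of_mem_ball h1ξ hy)]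

theorem stmt17 (p : ℕ) [Fact p.Prime] (hp : 3 ≤ p) (q k : ℕ) (hq : 1 ≤ q) (hk : 1 ≤ k)
    (θ : ℚ_[p]) (hqk : ‖(q : ℚ_[p])‖ < ‖(k : ℚ_[p])‖) (hθq : ‖θ - 1‖ < ‖(q : ℚ_[p])‖ ^ 2)
    (ξ : ℚ_[p]) (hξ : ξ ^ k = 1) (hξ1 : ξ ≠ 1) :
    ∀ x y : ℚ_[p],
      ‖x - (2 - (q : ℚ_[p]) - θ + (q : ℚ_[p]) * (θ - 1) / (1 - ξ))‖ < ‖(q : ℚ_[p]) * (θ - 1)‖ →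
      ‖y - (2 - (q : ℚ_[p]) - θ + (q : ℚ_[p]) * (θ - 1) / (1 - ξ))‖ < ‖(q : ℚ_[p]) * (θ - 1)‖ →
      ‖pottsBethe p q k θ x - pottsBethe p q k θ y‖ * ‖(q : ℚ_[p]) * (θ - 1)‖
        = ‖(k : ℚ_[p])‖ * ‖x - y‖ :=
  stmt17_general p hp q k hk θ hθq ξ hξ hξ1
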